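/- arXiv:2507.09937 — 3 statements merged into one kernel-verified Lean document; each statement's English description precedes it below -/
import Mathlib

section
/- Let e^mem ∈ ℝ^{d_emb} be a unit vector, let z^mem ∈ ℝ^{d_h}, let γ > 0, ε > 0, c_min > 0, and m ≥ 1. Let z^{(1)}, …, z^{(m)} ∈ ℝ^{d_h} and e^{(1)}, …, e^{(m)} ∈ ℝ^{d_emb} satisfy ⟨e^mem, e^{(j)}⟩ = 0 and ⟨z^{(j)}, z^mem⟩ ≥ ε for all j. Let W^{(0)}, …, W^{(m)} ∈ ℝ^{d_emb × d_h} satisfy the update W^{(j)} = W^{(j−1)} + γ (e^{(j)} − σ(W^{(j−1)} z^{(j)})) (z^{(j)})^⊤, and assume that ⟨e^mem, σ(W^{(j−1)} z^{(j)})⟩ ≥ c_min for all j = 1, …, m. Then ⟨e^mem, W^{(m)} z^mem⟩ ≤ ⟨e^mem, W^{(0)} z^mem⟩ − γ m ε c_min. -/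
open Matrix

/-- The softmax function: `σ(x)_i = exp(x_i) / Σ_j exp(x_j)`. -/
noncomputable def softmax {d : ℕ} (x : Fin d → ℝ) : Fin d → ℝ :=
  fun i => Real.exp (x i) / ∑ j, Real.exp (x j)

/-- The Euclidean (ℓ²) norm of a vector in `Fin n → ℝ`. -/
noncomputable def l2norm {n : ℕ} (x : Fin n → ℝ) : ℝ :=
  Real.sqrt (∑ i, (x i) ^ 2)

/-- The standard inner product on `Fin n → ℝ`. -/
def dotp {n : ℕ} (x y : Fin n → ℝ) : ℝ := ∑ i, x i * y i

theorem dotp_eq_dotProduct {n : ℕ} (x y : Fin n → ℝ) : dotp x y = x ⬝ᵥ y := rfl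

theorem Matrix.dotProduct_add_smul_vecMulVec_mulVec {α m n : Type*} [CommSemiring α]
    [Fintype m] [Fintype n] (a : m → α) (A : Matrix m n α) (c : α) (u : m → α) (v w : n → α) :
    a ⬝ᵥ (A + c • vecMulVec u v) *ᵥ w = a ⬝ᵥ A *ᵥ w + c * (a ⬝ᵥ u) * (v ⬝ᵥ w) := by
  rw [add_mulVec, smul_mulVec, vecMulVec_mulVec, op_smul_eq_smul, dotProduct_add,
    dotProduct_smul, dotProduct_smul, smul_eq_mul, smul_eq_mul]
  ring

theorem le_sub_nsmul_of_forall_le_sub {α : Type*} [AddCommGroup α] [PartialOrder α]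
    [IsOrderedAddMonoid α] {f : ℕ → α} {δ : α} {m : ℕ}
    (h : ∀ j ∈ Finset.Icc 1 m, f j ≤ f (j - 1) - δ) : f m ≤ f 0 - m • δ := by
  induction m with
  | zero => simp
  | succ k ih =>
    have hstep := h (k + 1) (Finset.mem_Icc.2 ⟨Nat.le_add_left 1 k, le_rfl⟩)
    have hprev := ih fun j hj => h j (Finset.Icc_subset_Icc_right k.le_succ hj)
    rw [Nat.add_sub_cancel] at hstep
    calc f (k + 1) ≤ f k - δ := hstep
      _ ≤ f 0 - k • δ - δ := sub_le_sub_right hprev δ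
      _ = f 0 - (k + 1) • δ := by rw [succ_nsmul, sub_sub]

/-- The step changes the logit by `γ (⟨a, t⟩ - ⟨a, p⟩) ⟨z, x⟩ = -γ ⟨a, p⟩ ⟨z, x⟩`. -/
theorem dotp_mulVec_add_smul_vecMulVec_sub_le {d h : ℕ} {a t p : Fin d → ℝ}
    {z x : Fin h → ℝ} (W : Matrix (Fin d) (Fin h) ℝ) {γ ε c : ℝ}
    (hγ : 0 ≤ γ) (hε : 0 ≤ ε) (hc : 0 ≤ c)
    (ht : dotp a t = 0) (hp : c ≤ dotp a p) (hz : ε ≤ dotp z x) :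
    dotp a ((W + γ • vecMulVec (t - p) z) *ᵥ x) ≤ dotp a (W *ᵥ x) - γ * ε * c := by
  simp only [dotp_eq_dotProduct] at *
  rw [dotProduct_add_smul_vecMulVec_mulVec, dotProduct_sub, ht]
  have hpz : c * ε ≤ (a ⬝ᵥ p) * (z ⬝ᵥ x) := mul_le_mul hp hz hε (hc.trans hp)
  linarith [mul_le_mul_of_nonneg_left hpz hγ]

theorem forgetting_in_standard_training_general {demb dh : ℕ}
    (emem : Fin demb → ℝ)
    (zmem : Fin dh → ℝ)
    (γ ε cmin : ℝ) (hγ : 0 < γ) (hε : 0 < ε) (hcmin : 0 < cmin)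
    (m : ℕ)
    (z : ℕ → Fin dh → ℝ) (e : ℕ → Fin demb → ℝ)
    (horth : ∀ j ∈ Finset.Icc 1 m, dotp emem (e j) = 0)
    (hsim : ∀ j ∈ Finset.Icc 1 m, ε ≤ dotp (z j) zmem)
    (W : ℕ → Matrix (Fin demb) (Fin dh) ℝ)
    (hupd : ∀ j ∈ Finset.Icc 1 m,
      W j = W (j - 1)
        + γ • vecMulVec (e j - softmax ((W (j - 1)).mulVec (z j))) (z j))
    (hpred : ∀ j ∈ Finset.Icc 1 m,
      cmin ≤ dotp emem (softmax ((W (j - 1)).mulVec (z j)))) :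
    dotp emem ((W m).mulVec zmem)
      ≤ dotp emem ((W 0).mulVec zmem) - γ * m * ε * cmin := by
  have hstep : ∀ j ∈ Finset.Icc 1 m,
      dotp emem ((W j).mulVec zmem) ≤ dotp emem ((W (j - 1)).mulVec zmem) - γ * ε * cmin :=
    fun j hj => (hupd j hj).symm ▸ dotp_mulVec_add_smul_vecMulVec_sub_le _ hγ.le hε.le hcmin.le
      (horth j hj) (hpred j hj) (hsim j hj)
  calc dotp emem ((W m).mulVec zmem)
      ≤ dotp emem ((W 0).mulVec zmem) - m • (γ * ε * cmin) :=
        le_sub_nsmul_of_forall_le_sub (f := fun n => dotp emem ((W n).mulVec zmem)) hstep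
    _ = dotp emem ((W 0).mulVec zmem) - γ * m * ε * cmin := by rw [nsmul_eq_mul]; ring

/-- Forgetting in standard training: under the SGD cross-entropy updates
`W^{(j)} = W^{(j-1)} + γ (e^{(j)} - σ(W^{(j-1)} z^{(j)})) (z^{(j)})ᵀ` on `m` other
sequences with targets orthogonal to `e_mem`, activations similar to `z_mem`
(`⟨z^{(j)}, z_mem⟩ ≥ ε`), and softmax mass `⟨e_mem, σ(W^{(j-1)} z^{(j)})⟩ ≥ c_min`,
the memorized logit drops:
`⟨e_mem, W^{(m)} z_mem⟩ ≤ ⟨e_mem, W^{(0)} z_mem⟩ - γ m ε c_min`. -/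
theorem forgetting_in_standard_training {demb dh : ℕ}
    (emem : Fin demb → ℝ) (hemem : l2norm emem = 1)
    (zmem : Fin dh → ℝ)
    (γ ε cmin : ℝ) (hγ : 0 < γ) (hε : 0 < ε) (hcmin : 0 < cmin)
    (m : ℕ) (hm : 1 ≤ m)
    (z : ℕ → Fin dh → ℝ) (e : ℕ → Fin demb → ℝ)
    (horth : ∀ j ∈ Finset.Icc 1 m, dotp emem (e j) = 0)
    (hsim : ∀ j ∈ Finset.Icc 1 m, ε ≤ dotp (z j) zmem)
    (W : ℕ → Matrix (Fin demb) (Fin dh) ℝ)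
    (hupd : ∀ j ∈ Finset.Icc 1 m,
      W j = W (j - 1)
        + γ • vecMulVec (e j - softmax ((W (j - 1)).mulVec (z j))) (z j))
    (hpred : ∀ j ∈ Finset.Icc 1 m,
      cmin ≤ dotp emem (softmax ((W (j - 1)).mulVec (z j)))) :
    dotp emem ((W m).mulVec zmem)
      ≤ dotp emem ((W 0).mulVec zmem) - γ * m * ε * cmin :=
  forgetting_in_standard_training_general emem zmem γ ε cmin hγ hε hcmin m z e horth hsim W hupd
    hpred
end

section
/- Let k ≥ 1 and let v_1, …, v_{k+1} ∈ ℝ^n be orthonormal and ũ_1, …, ũ_{k+1} ∈ ℝ^m be unit vectors. Let σ_1, …, σ_k > 0 satisfy σ_i < 1/(2k) for all i, and set F² := Σ_{i=1}^k σ_i². Let Δ > 1 be a real number and suppose 0 ≤ σ_i^Δ ≤ σ_i + Δ/(k+1) for i = 1, …, k and 0 ≤ σ_{k+1}^Δ ≤ Δ/(k+1). Then the matrix W_ent = Σ_{i=1}^{k} σ_i^Δ ũ_i v_i^⊤ + σ_{k+1}^Δ ũ_{k+1} v_{k+1}^⊤ satisfies ‖W_ent‖_F² ≤ F² + 2Δ²/k.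 -/
open Matrix

/-- The squared Frobenius norm of a matrix: the sum of the squares of its entries. -/
def frobSq {m n : ℕ} (A : Matrix (Fin m) (Fin n) ℝ) : ℝ :=
  ∑ i, ∑ j, (A i j) ^ 2

/-! Because the `vᵢ` are orthonormal, row `r` of `W_ent` has squared norm
`Σᵢ (σᵢᴰ ũᵢ(r))²` by Pythagoras, and summing over rows with `‖ũᵢ‖ = 1` gives
`‖W_ent‖_F² = Σᵢ (σᵢᴰ)²`. Expanding `(σᵢ + δ)²` with `δ = Δ/(k+1)` and using `Σᵢ σᵢ < 1/2`
bounds this by `F² + δ + (k+1)δ² = F² + (Δ + Δ²)/(k+1)`, which is at most `2Δ²/k` above `F²`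
since `Δ > 1`. -/

lemma sum_sq_eq_one_of_l2norm_eq_one {n : ℕ} {x : Fin n → ℝ} (hx : l2norm x = 1) :
    ∑ i, x i ^ 2 = 1 :=
  Real.sqrt_eq_one.mp hx

lemma sum_sq_sum_mul_of_orthonormal {ι : Type*} [Fintype ι] [DecidableEq ι] {n : ℕ}
    {v : ι → Fin n → ℝ} (hv : ∀ i j, dotp (v i) (v j) = if i = j then 1 else 0)
    (c : ι → ℝ) :
    ∑ t, (∑ l, c l * v l t) ^ 2 = ∑ l, c l ^ 2 := by
  calc ∑ t, (∑ l, c l * v l t) ^ 2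
      = ∑ l, ∑ l', c l * c l' * dotp (v l) (v l') := by
        simp_rw [sq, Finset.sum_mul_sum]
        rw [Finset.sum_comm]
        refine Finset.sum_congr rfl fun l _ => ?_
        rw [Finset.sum_comm]
        refine Finset.sum_congr rfl fun l' _ => ?_
        rw [dotp, Finset.mul_sum]
        exact Finset.sum_congr rfl fun t _ => by ring
    _ = ∑ l, c l ^ 2 := by simp [hv, sq]

lemma frobSq_sum_smul_vecMulVec {ι : Type*} [Fintype ι] [DecidableEq ι] {m n : ℕ}
    {v : ι → Fin n → ℝ} (hv : ∀ i j, dotp (v i) (v j) = if i = j then 1 else 0)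
    (u : ι → Fin m → ℝ) (c : ι → ℝ) :
    frobSq (∑ l, c l • vecMulVec (u l) (v l)) = ∑ l, c l ^ 2 * ∑ i, u l i ^ 2 := by
  have hrow : ∀ i, ∑ j, (∑ l, c l • vecMulVec (u l) (v l)) i j ^ 2
      = ∑ l, (c l * u l i) ^ 2 := fun i => by
    simp only [Matrix.sum_apply, Matrix.smul_apply, vecMulVec_apply, smul_eq_mul, ← mul_assoc]
    exact sum_sq_sum_mul_of_orthonormal hv _
  simp only [frobSq, hrow, mul_pow, Finset.mul_sum]
  exact Finset.sum_comm

lemma sum_sq_le_of_le_add {ι : Type*} [Fintype ι] {x a : ι → ℝ} {δ : ℝ}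
    (hx : ∀ i, 0 ≤ x i ∧ x i ≤ a i + δ) :
    ∑ i, x i ^ 2 ≤ ∑ i, a i ^ 2 + 2 * δ * ∑ i, a i + Fintype.card ι * δ ^ 2 := by
  calc ∑ i, x i ^ 2 ≤ ∑ i, (a i ^ 2 + 2 * δ * a i + δ ^ 2) :=
        Finset.sum_le_sum fun i _ =>
          (pow_le_pow_left₀ (hx i).1 (hx i).2 2).trans_eq (by ring)
    _ = _ := by
        simp [Finset.sum_add_distrib, Finset.mul_sum]

lemma sum_le_half_of_lt {k : ℕ} {σ : Fin k → ℝ} (hσ : ∀ i, σ i < 1 / (2 * k)) :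
    ∑ i, σ i ≤ 1 / 2 := by
  rcases Nat.eq_zero_or_pos k with rfl | hk
  · simp
  calc ∑ i, σ i ≤ ∑ _i : Fin k, 1 / (2 * (k : ℝ)) := Finset.sum_le_sum fun i _ => (hσ i).le
    _ = 1 / 2 := by
        rw [Finset.sum_const, Finset.card_univ, Fintype.card_fin, nsmul_eq_mul]
        field_simp

lemma div_add_mul_sq_div_le {k : ℕ} (hk : 1 ≤ k) {Δ : ℝ} (hΔ : 1 < Δ) :
    Δ / (k + 1) + (k + 1) * (Δ / (k + 1)) ^ 2 ≤ 2 * Δ ^ 2 / k := by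
  have hk' : (1 : ℝ) ≤ k := by exact_mod_cast hk
  calc Δ / (k + 1) + (k + 1) * (Δ / (k + 1)) ^ 2 = (Δ + Δ ^ 2) / (k + 1) := by
        field_simp
    _ ≤ 2 * Δ ^ 2 / k := by
      rw [div_le_div_iff₀ (by positivity) (by positivity)]
      nlinarith [mul_le_mul_of_nonneg_left hk' (by positivity : (0 : ℝ) ≤ Δ ^ 2)]

theorem frobSq_entangled_le_general (k : ℕ) (hk : 1 ≤ k) {m n : ℕ}
    (v : Fin (k + 1) → Fin n → ℝ)
    (hv : ∀ i j, dotp (v i) (v j) = if i = j then 1 else 0)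
    (u : Fin (k + 1) → Fin m → ℝ) (hu : ∀ i, l2norm (u i) = 1)
    (σ : Fin k → ℝ) (hσlt : ∀ i, σ i < 1 / (2 * k))
    (Δ : ℝ) (hΔ : 1 < Δ)
    (σΔ : Fin (k + 1) → ℝ)
    (hσΔ1 : ∀ i : Fin k,
      0 ≤ σΔ i.castSucc ∧ σΔ i.castSucc ≤ σ i + Δ / (k + 1))
    (hσΔ2 : 0 ≤ σΔ (Fin.last k) ∧ σΔ (Fin.last k) ≤ Δ / (k + 1)) :
    frobSq (∑ i, σΔ i • vecMulVec (u i) (v i))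
      ≤ (∑ i, (σ i) ^ 2) + 2 * Δ ^ 2 / k := by
  simp only [frobSq_sum_smul_vecMulVec hv, sum_sq_eq_one_of_l2norm_eq_one (hu _), mul_one]
  rw [Fin.sum_univ_castSucc]
  have hbudget := div_add_mul_sq_div_le hk hΔ
  set δ := Δ / (k + 1)
  have hδ : 0 ≤ δ := by positivity
  have hbulk := sum_sq_le_of_le_add hσΔ1
  have hlast : σΔ (Fin.last k) ^ 2 ≤ δ ^ 2 := pow_le_pow_left₀ hσΔ2.1 hσΔ2.2 2
  have hcross : 2 * δ * ∑ i, σ i ≤ δ := by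
    linarith [mul_le_mul_of_nonneg_left (sum_le_half_of_lt hσlt) hδ]
  simp only [Fintype.card_fin] at hbulk
  linarith

/-- The entangled memorizing solution `W_ent = Σ_{i=1}^{k+1} σᵢᴰ ũᵢ vᵢᵀ`, with
`v₁, …, v_{k+1}` orthonormal, `ũᵢ` unit vectors, singular values `σᵢ < 1/(2k)`,
and perturbed singular values `σᵢᴰ ≤ σᵢ + Δ/(k+1)` (for `i ≤ k`) and
`σ_{k+1}ᴰ ≤ Δ/(k+1)` with `Δ > 1`, satisfies `‖W_ent‖_F² ≤ Σᵢ σᵢ² + 2Δ²/k`. -/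
theorem frobSq_entangled_le (k : ℕ) (hk : 1 ≤ k) {m n : ℕ}
    (v : Fin (k + 1) → Fin n → ℝ)
    (hv : ∀ i j, dotp (v i) (v j) = if i = j then 1 else 0)
    (u : Fin (k + 1) → Fin m → ℝ) (hu : ∀ i, l2norm (u i) = 1)
    (σ : Fin k → ℝ) (hσpos : ∀ i, 0 < σ i) (hσlt : ∀ i, σ i < 1 / (2 * k))
    (Δ : ℝ) (hΔ : 1 < Δ)
    (σΔ : Fin (k + 1) → ℝ)
    (hσΔ1 : ∀ i : Fin k,
      0 ≤ σΔ i.castSucc ∧ σΔ i.castSucc ≤ σ i + Δ / (k + 1))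
    (hσΔ2 : 0 ≤ σΔ (Fin.last k) ∧ σΔ (Fin.last k) ≤ Δ / (k + 1)) :
    frobSq (∑ i, σΔ i • vecMulVec (u i) (v i))
      ≤ (∑ i, (σ i) ^ 2) + 2 * Δ ^ 2 / k :=
  frobSq_entangled_le_general k hk v hv u hu σ hσlt Δ hΔ σΔ hσΔ1 hσΔ2
end

section
/- Consider d_emb ≥ 2, coordinates {1, …, d_h} partitioned into a shared set S and a memorization set M, and matrices W^{(0)}, …, W^{(N)} ∈ ℝ^{d_emb × d_h} with W^{(0)} = 0 and update W^{(t+1)} = W^{(t)} + γ (e^{(t)} − σ(W^{(t)} z^{(t)})) (z^{(t)})^⊤ for activations z^{(t)} ∈ ℝ^{d_h} and targets e^{(t)} ∈ ℝ^{d_emb}, where γ > 0. Let K ⊆ {0, …, N−1} with |K| = k be the steps at which the memorized pair appears: z^{(t)} = z^mem and e^{(t)} = e^mem for t ∈ K, where e^mem is a unit vector and the restriction of z^mem to the coordinates M has unit Euclidean norm. Assume (i) ⟨e^mem, e^{(t)}⟩ = 0 for all t ∉ K; (ii) there is c_max > 0 with ⟨e^mem, σ(W^{(t)} z^{(t)})⟩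 ≤ c_max for all t; (iii) there is a set K' ⊆ {0,…,N−1} \ K with |K'| = p(N−k) for some p ∈ [0,1] such that z^{(t)}_M = 0 for every t ∉ K ∪ K' (the memorization-sink neurons are dropped out on those steps); and (iv) there is ε_mem ≥ 0 with 0 ≤ ⟨z^{(t)}_M, z^mem_M⟩ ≤ ε_mem for all t ∈ K', where x_M denotes the restriction of x to the coordinates in M. Then the memorization-neurons-only logit satisfies ⟨e^mem, W^{(N)}_M z^mem_M⟩ ≥ γ k (1 − c_max) − γ p (N − k) ε_mem c_max, where W_M denotes the submatrix of W consisting of the columns indexed by M. -/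
/-!
The sink logit `⟨e_mem, W_M z_mem,M⟩` starts at `0`, and each SGD step changes it by
`γ ⟨e_mem, e^{(t)} - σ(W^{(t)} z^{(t)})⟩ ⟨z^{(t)}_M, z_mem,M⟩`. On the `k` memorized steps the
two factors are at least `1 - c_max` and exactly `1`; on the `p (N - k)` steps of `K'` the target
is orthogonal to `e_mem`, so the increment is at least `-γ c_max ε_mem`; on every other step the
sink coordinates are dropped out and the increment vanishes. Summing the increments gives the bound.
-/

open Matrix

open Finset

def sinkLogit {m n : ℕ} (M : Finset (Fin n)) (e : Fin m → ℝ) (z : Fin n → ℝ)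
    (W : Matrix (Fin m) (Fin n) ℝ) : ℝ :=
  ∑ a, e a * ∑ j ∈ M, W a j * z j

section SinkLogit

variable {m n : ℕ} (M : Finset (Fin n)) (e : Fin m → ℝ) (z : Fin n → ℝ)

lemma sinkLogit_zero : sinkLogit M e z 0 = 0 := by
  simp [sinkLogit]

lemma sinkLogit_add_smul_vecMulVec (W : Matrix (Fin m) (Fin n) ℝ) (γ : ℝ)
    (u : Fin m → ℝ) (v : Fin n → ℝ) :
    sinkLogit M e z (W + γ • vecMulVec u v) =
      sinkLogit M e z W + γ * dotp e u * ∑ j ∈ M, v j * z j := by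
  simp only [sinkLogit, dotp, Matrix.add_apply, Matrix.smul_apply, vecMulVec_apply, smul_eq_mul,
    add_mul, sum_add_distrib, mul_add, mul_sum, sum_mul]
  congr 1
  rw [sum_comm]
  exact sum_congr rfl fun j _ => sum_congr rfl fun a _ => by ring

end SinkLogit

lemma dotp_self_of_l2norm_eq_one {n : ℕ} {x : Fin n → ℝ} (hx : l2norm x = 1) :
    dotp x x = 1 := by
  have hsq : ∑ i, x i ^ 2 = 1 := by
    rwa [l2norm, Real.sqrt_eq_one] at hx
  simpa only [dotp, sq] using hsq

lemma dotp_sub_right {n : ℕ} (x y w : Fin n → ℝ) : dotp x (y - w) = dotp x y - dotp x w :=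
  dotProduct_sub x y w

lemma card_mul_add_card_mul_le_sum {ι : Type*} [DecidableEq ι] {s K K' : Finset ι}
    {f : ι → ℝ} {a b : ℝ} (hK : K ⊆ s) (hK' : K' ⊆ s) (hdisj : Disjoint K K')
    (ha : ∀ t ∈ K, a ≤ f t) (hb : ∀ t ∈ K', b ≤ f t)
    (hrest : ∀ t ∈ s, t ∉ K → t ∉ K' → 0 ≤ f t) :
    K.card * a + K'.card * b ≤ ∑ t ∈ s, f t := by
  have hsum_K : (K.card : ℝ) * a ≤ ∑ t ∈ K, f t := by
    simpa only [nsmul_eq_mul] using card_nsmul_le_sum K f a ha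
  have hsum_K' : (K'.card : ℝ) * b ≤ ∑ t ∈ K', f t := by
    simpa only [nsmul_eq_mul] using card_nsmul_le_sum K' f b hb
  have hsum_rest : 0 ≤ ∑ t ∈ s \ (K ∪ K'), f t := by
    refine sum_nonneg fun t ht => ?_
    simp only [mem_sdiff, mem_union, not_or] at ht
    exact hrest t ht.1 ht.2.1 ht.2.2
  rw [← sum_sdiff (union_subset hK hK'), sum_union hdisj]
  linarith

theorem memsinks_sink_logit_lower_bound_general {demb dh : ℕ}
    (M : Finset (Fin dh))
    (N k : ℕ) (γ : ℝ) (hγ : 0 < γ)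
    (zmem : Fin dh → ℝ) (emem : Fin demb → ℝ)
    (hememunit : l2norm emem = 1)
    (hzmemM : ∑ i ∈ M, (zmem i) ^ 2 = 1)
    (z : ℕ → Fin dh → ℝ) (e : ℕ → Fin demb → ℝ)
    (W : ℕ → Matrix (Fin demb) (Fin dh) ℝ) (hW0 : W 0 = 0)
    (hupd : ∀ t < N,
      W (t + 1) = W t + γ • vecMulVec (e t - softmax ((W t).mulVec (z t))) (z t))
    (K : Finset ℕ) (hK : K ⊆ Finset.range N) (hKcard : K.card = k)
    (hmem : ∀ t ∈ K, z t = zmem ∧ e t = emem)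
    (horth : ∀ t < N, t ∉ K → dotp emem (e t) = 0)
    (cmax : ℝ) (hcmax : 0 < cmax)
    (hpred : ∀ t < N, dotp emem (softmax ((W t).mulVec (z t))) ≤ cmax)
    (K' : Finset ℕ) (hK' : K' ⊆ Finset.range N) (hK'disj : Disjoint K' K)
    (p : ℝ)
    (hK'card : (K'.card : ℝ) = p * ((N : ℝ) - k))
    (hdrop : ∀ t < N, t ∉ K → t ∉ K' → ∀ i ∈ M, z t i = 0)
    (εmem : ℝ)
    (hsim : ∀ t ∈ K',
      0 ≤ ∑ i ∈ M, z t i * zmem i ∧ ∑ i ∈ M, z t i * zmem i ≤ εmem) :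
    γ * k * (1 - cmax) - γ * p * ((N : ℝ) - k) * εmem * cmax
      ≤ ∑ a, emem a * ∑ j ∈ M, W N a j * zmem j := by
  set g : ℕ → ℝ := fun t => sinkLogit M emem zmem (W t)
  have hinc : ∀ t < N, g (t + 1) - g t = γ * (dotp emem (e t) -
      dotp emem (softmax ((W t).mulVec (z t)))) * ∑ j ∈ M, z t j * zmem j := by
    intro t ht
    simp only [g, hupd t ht, sinkLogit_add_smul_vecMulVec, dotp_sub_right]
    ring
  have hmem_step : ∀ t ∈ K, γ * (1 - cmax) ≤ g (t + 1) - g t := by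
    intro t ht
    have htN : t < N := mem_range.mp (hK ht)
    have hpred_t := hpred t htN
    obtain ⟨hz, he⟩ := hmem t ht
    rw [hz] at hpred_t
    rw [hinc t htN, hz, he, dotp_self_of_l2norm_eq_one hememunit]
    simp only [← sq, hzmemM, mul_one]
    exact mul_le_mul_of_nonneg_left (by linarith) hγ.le
  have hsink_step : ∀ t ∈ K', -(γ * εmem * cmax) ≤ g (t + 1) - g t := by
    intro t ht
    have htN : t < N := mem_range.mp (hK' ht)
    obtain ⟨hsim_nonneg, hsim_le⟩ := hsim t ht
    have hlogit : dotp emem (softmax ((W t).mulVec (z t))) * ∑ i ∈ M, z t i * zmem i ≤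
        cmax * εmem :=
      mul_le_mul (hpred t htN) hsim_le hsim_nonneg hcmax.le
    rw [hinc t htN, horth t htN (disjoint_left.mp hK'disj ht)]
    linarith [mul_le_mul_of_nonneg_left hlogit hγ.le]
  have hdrop_step : ∀ t ∈ range N, t ∉ K → t ∉ K' → 0 ≤ g (t + 1) - g t := by
    intro t ht htK htK'
    have htN : t < N := mem_range.mp ht
    rw [hinc t htN, sum_eq_zero fun i hi => by rw [hdrop t htN htK htK' i hi, zero_mul]]
    simp
  calc γ * k * (1 - cmax) - γ * p * ((N : ℝ) - k) * εmem * cmax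
      = K.card * (γ * (1 - cmax)) + K'.card * -(γ * εmem * cmax) := by
        rw [hKcard, hK'card]; ring
    _ ≤ ∑ t ∈ range N, (g (t + 1) - g t) :=
        card_mul_add_card_mul_le_sum hK hK' hK'disj.symm hmem_step hsink_step hdrop_step
    _ = g N := by simp only [sum_range_sub g, g, hW0, sinkLogit_zero, sub_zero]

/-- MemSinks accumulates memorization in the memorization-sink neurons. The hidden
coordinates are partitioned into a shared set `S` and a memorization set `M`. Training
proceeds by `W^{(t+1)} = W^{(t)} + γ (e^{(t)} - σ(W^{(t)} z^{(t)})) (z^{(t)})ᵀ` from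
`W^{(0)} = 0`, with the memorized pair `(z_mem, e_mem)` appearing at the `k` steps in
`K`. The sink coordinates `M` are active on only the `p(N - k)` non-memorized steps in
`K'` (and are dropped out, `z^{(t)}_M = 0`, on all other non-memorized steps). Under the
stated orthogonality, softmax-mass, and similarity assumptions, the
memorization-neurons-only logit satisfies
`⟨e_mem, W^{(N)}_M z_mem,M⟩ ≥ γ k (1 - c_max) - γ p (N - k) ε_mem c_max`. -/
theorem memsinks_sink_logit_lower_bound {demb dh : ℕ} (hdemb : 2 ≤ demb)
    (S M : Finset (Fin dh)) (hdisj : Disjoint S M) (hunion : S ∪ M = Finset.univ)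
    (N k : ℕ) (γ : ℝ) (hγ : 0 < γ)
    (zmem : Fin dh → ℝ) (emem : Fin demb → ℝ)
    (hememunit : l2norm emem = 1)
    (hzmemM : ∑ i ∈ M, (zmem i) ^ 2 = 1)
    (z : ℕ → Fin dh → ℝ) (e : ℕ → Fin demb → ℝ)
    (W : ℕ → Matrix (Fin demb) (Fin dh) ℝ) (hW0 : W 0 = 0)
    (hupd : ∀ t < N,
      W (t + 1) = W t + γ • vecMulVec (e t - softmax ((W t).mulVec (z t))) (z t))
    (K : Finset ℕ) (hK : K ⊆ Finset.range N) (hKcard : K.card = k)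
    (hmem : ∀ t ∈ K, z t = zmem ∧ e t = emem)
    (horth : ∀ t < N, t ∉ K → dotp emem (e t) = 0)
    (cmax : ℝ) (hcmax : 0 < cmax)
    (hpred : ∀ t < N, dotp emem (softmax ((W t).mulVec (z t))) ≤ cmax)
    (K' : Finset ℕ) (hK' : K' ⊆ Finset.range N) (hK'disj : Disjoint K' K)
    (p : ℝ) (hp0 : 0 ≤ p) (hp1 : p ≤ 1)
    (hK'card : (K'.card : ℝ) = p * ((N : ℝ) - k))
    (hdrop : ∀ t < N, t ∉ K → t ∉ K' → ∀ i ∈ M, z t i = 0)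
    (εmem : ℝ) (hεmem : 0 ≤ εmem)
    (hsim : ∀ t ∈ K',
      0 ≤ ∑ i ∈ M, z t i * zmem i ∧ ∑ i ∈ M, z t i * zmem i ≤ εmem) :
    γ * k * (1 - cmax) - γ * p * ((N : ℝ) - k) * εmem * cmax
      ≤ ∑ a, emem a * ∑ j ∈ M, W N a j * zmem j :=
  memsinks_sink_logit_lower_bound_general M N k γ hγ zmem emem hememunit hzmemM z e W hW0 hupd K hK
    hKcard hmem horth cmax hcmax hpred K' hK' hK'disj p hK'card hdrop εmem hsim
end
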